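/- arXiv:1001.1862 — 2 statements merged into one kernel-verified Lean document; each statement's English description precedes it below -/
import Mathlib

section
/- If A is a self-localized ring, then A/J(A) is a simple ring. -/
/-! If `φ : A → B` is a homomorphism to a nonzero ring and `φ x = 0`, then `φ (1 + y * x) = 1`
for every `y`, so locality of `φ` makes every `1 + y * x` a unit: `ker φ ⊆ J(A)`. A proper ideal
`K` of `A / J(A)` gives the kernel of `A → A / J(A) → (A / J(A)) / K`, which lies in `J(A)`
only if `K = 0`. -/

universe u

/-- A nonzero ring `A` is self-localized if every ring homomorphism from `A` to a nonzero
ring is a local homomorphism (the preimage of the units equals the units). -/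
def SelfLocalized (A : Type u) [Ring A] : Prop :=
  ∀ (B : Type u) [Ring B], Nontrivial B →
    ∀ φ : A →+* B, φ ⁻¹' {b | IsUnit b} = {a : A | IsUnit a}

namespace TwoSidedIdeal

variable {R : Type*} [Ring R]

lemma mem_jacobson_bot_of_forall_isUnit {x : R} (h : ∀ y, IsUnit (1 + y * x)) :
    x ∈ jacobson (⊥ : TwoSidedIdeal R) := by
  refine mem_jacobson_iff.2 fun y => ⟨↑(h y).unit⁻¹, ?_⟩
  have hinv : (↑(h y).unit⁻¹ : R) * (1 + y * x) = 1 := (h y).val_inv_mul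
  rw [mem_bot, ← sub_eq_zero_of_eq hinv]
  noncomm_ring

lemma jacobson_bot_ne_top [Nontrivial R] : jacobson (⊥ : TwoSidedIdeal R) ≠ ⊤ := fun h => by
  have := congrArg asIdeal h
  rw [asIdeal_jacobson, bot_asIdeal, top_asIdeal, Ideal.jacobson_eq_top_iff] at this
  exact bot_ne_top this

lemma nontrivial_ringCon_quotient_iff (I : TwoSidedIdeal R) :
    Nontrivial I.ringCon.Quotient ↔ I ≠ ⊤ := by
  rw [← not_subsingleton_iff_nontrivial, ← subsingleton_iff_zero_eq_one, ne_eq, ← I.one_mem_iff,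
    not_iff_not, eq_comm, ← map_one I.ringCon.mk', ← mem_ker, I.ker_ringCon_mk']

lemma ker_eq_bot_of_ker_comp_le {S T : Type*} [Ring S] [Ring T] {f : R →+* S}
    (hf : Function.Surjective f) {g : S →+* T} (h : ker (g.comp f) ≤ ker f) : ker g = ⊥ := by
  refine eq_bot_iff.2 fun s hs => ?_
  obtain ⟨r, rfl⟩ := hf s
  exact (mem_bot S).2 ((mem_ker f).1 (h ((mem_ker _).2 ((mem_ker g).1 hs))))

end TwoSidedIdeal

open TwoSidedIdeal

lemma SelfLocalized.ker_le_jacobson {A : Type u} [Ring A] (h : SelfLocalized A) {B : Type u}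
    [Ring B] [Nontrivial B] (φ : A →+* B) : ker φ ≤ jacobson (⊥ : TwoSidedIdeal A) := by
  intro x hx
  refine mem_jacobson_bot_of_forall_isUnit fun y => ?_
  have hφ : φ (1 + y * x) = 1 := by simp [(mem_ker φ).1 hx]
  change 1 + y * x ∈ {a : A | IsUnit a}
  rw [← h B inferInstance φ, Set.mem_preimage, hφ]
  exact isUnit_one

/-- If `A` is a self-localized ring, then `A / J(A)` is a simple ring, where `J(A)` is the
Jacobson radical of `A`. -/
theorem quotient_jacobson_simple_of_selfLocalized (A : Type u) [Ring A] [Nontrivial A]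
    (h : SelfLocalized A) :
    IsSimpleRing (TwoSidedIdeal.jacobson (⊥ : TwoSidedIdeal A)).ringCon.Quotient := by
  set J := jacobson (⊥ : TwoSidedIdeal A)
  have : Nontrivial J.ringCon.Quotient :=
    (nontrivial_ringCon_quotient_iff J).2 jacobson_bot_ne_top
  refine .of_eq_bot_or_eq_top fun K => (eq_or_ne K ⊤).symm.imp (fun hK => ?_) id
  have : Nontrivial K.ringCon.Quotient := (nontrivial_ringCon_quotient_iff K).2 hK
  rw [← K.ker_ringCon_mk']
  refine ker_eq_bot_of_ker_comp_le J.ringCon.mk'_surjective ?_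
  rw [J.ker_ringCon_mk']
  exact h.ker_le_jacobson _
end

section
/- A von Neumann regular ring is self-localized if and only if it is a simple ring. -/
universe u

/-!
Let `a * x * a = a`. Then `a * (1 - x * a) = 0`, and if `φ a = 0` then `φ (1 - x * a) = 1`; so when
`φ` is local, `1 - x * a` is a unit and `a = 0`. Hence local homomorphisms out of a von Neumann
regular ring are injective, and applying this to the quotient maps shows that a self-localized
regular ring is simple. Conversely, if `φ` is injective and `φ a` is a unit, then `φ x` is its
inverse, so `a * x = 1 = x * a`; homomorphisms out of a simple ring are injective.
-/

lemma IsUnit.mul_eq_one_and_mul_eq_one_of_mul_mul_self_eq {M : Type*} [Monoid M] {a x : M}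
    (ha : IsUnit a) (h : a * x * a = a) : a * x = 1 ∧ x * a = 1 :=
  ⟨ha.mul_left_inj.mp (by rw [h, one_mul]),
    ha.mul_right_inj.mp (by rw [← mul_assoc, h, mul_one])⟩

lemma isUnit_of_isUnit_map_of_mul_mul_self_eq {M N F : Type*} [Monoid M] [Monoid N]
    [FunLike F M N] [MonoidHomClass F M N] {f : F} (hf : Function.Injective f) {a x : M}
    (h : a * x * a = a) (hfa : IsUnit (f a)) : IsUnit a := by
  have hfx : f a * f x * f a = f a := by rw [← map_mul, ← map_mul, h]
  obtain ⟨hax, hxa⟩ := hfa.mul_eq_one_and_mul_eq_one_of_mul_mul_self_eq hfx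
  refine isUnit_iff_exists.mpr ⟨x, hf ?_, hf ?_⟩ <;> simpa [map_mul]

lemma eq_zero_of_mul_mul_self_eq_of_isUnit_one_sub {A : Type*} [Ring A] {a x : A}
    (h : a * x * a = a) (hu : IsUnit (1 - x * a)) : a = 0 :=
  hu.mul_left_eq_zero.mp (by rw [mul_sub, mul_one, ← mul_assoc, h, sub_self])

lemma injective_of_preimage_isUnit_eq {A B : Type*} [Ring A] [Ring B]
    (hvn : ∀ a : A, ∃ x : A, a * x * a = a) {φ : A →+* B}
    (hφ : φ ⁻¹' {b | IsUnit b} = {a : A | IsUnit a}) : Function.Injective φ := by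
  refine (injective_iff_map_eq_zero φ).mpr fun a ha => ?_
  obtain ⟨x, hx⟩ := hvn a
  have hu : 1 - x * a ∈ φ ⁻¹' {b | IsUnit b} := by simp [ha]
  rw [hφ] at hu
  exact eq_zero_of_mul_mul_self_eq_of_isUnit_one_sub hx hu

lemma isSimpleRing_of_selfLocalized {A : Type u} [Ring A] [Nontrivial A]
    (hvn : ∀ a : A, ∃ x : A, a * x * a = a) (hA : SelfLocalized A) : IsSimpleRing A := by
  refine IsSimpleRing.of_eq_bot_or_eq_top fun I => ?_
  rw [← I.ker_ringCon_mk']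
  rcases subsingleton_or_nontrivial I.ringCon.Quotient with hQ | hQ
  · exact Or.inr <| TwoSidedIdeal.one_mem_iff _ |>.mp <|
      (TwoSidedIdeal.mem_ker _).mpr (Subsingleton.elim _ _)
  · exact Or.inl <| (TwoSidedIdeal.ker_eq_bot _).mpr <|
      injective_of_preimage_isUnit_eq hvn (hA _ hQ _)

lemma selfLocalized_of_isSimpleRing {A : Type u} [Ring A] [IsSimpleRing A]
    (hvn : ∀ a : A, ∃ x : A, a * x * a = a) : SelfLocalized A := by
  intro B _ _ φ
  ext a
  refine ⟨fun hφa => ?_, fun ha => ha.map φ⟩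
  obtain ⟨x, hx⟩ := hvn a
  exact isUnit_of_isUnit_map_of_mul_mul_self_eq φ.injective hx hφa

/-- A von Neumann regular ring is self-localized iff it is a simple ring. -/
theorem vonNeumannRegular_selfLocalized_iff_simple (A : Type u) [Ring A] [Nontrivial A]
    (hvn : ∀ a : A, ∃ x : A, a * x * a = a) :
    SelfLocalized A ↔ IsSimpleRing A :=
  ⟨isSimpleRing_of_selfLocalized hvn, fun _ => selfLocalized_of_isSimpleRing hvn⟩
end
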